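/- Fix an integer k ≥ 2. For every ε > 0 there exists M such that for all integers m ≥ M one has e_{k,m} ≤ m^{-(k-ε)m}. (That is, e_{k,m} ≤ m^{-(k-o(1))m} as m → ∞.) -/

import Mathlib

open scoped BigOperators

/-- A positive integer is *powerful* if every prime dividing it divides it with
multiplicity at least `2`. -/
def Powerful (f : ℕ) : Prop := 0 < f ∧ ∀ p : ℕ, p.Prime → p ∣ f → p ^ 2 ∣ f

/-- `omegaK k n` is the number of primes dividing `n` with multiplicity exactly `k`. -/
def omegaK (k n : ℕ) : ℕ := (n.primeFactors.filter fun p => n.factorization p = k).card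

/-- The density `e_{k,m}` of integers `n` with `ω_k(n) = m`. -/
noncomputable def ekm (k m : ℕ) : ℝ :=
  6 / Real.pi ^ 2 *
    ∑' f : {f : ℕ // Powerful f ∧ omegaK k f = m},
      ((f : ℕ) : ℝ)⁻¹ * ∏ p ∈ (f : ℕ).primeFactors, (1 + 1 / (p : ℝ))⁻¹

/-!
Write a powerful `f` with `ω_k(f) = m` as `f = (∏_{p ∈ S} p)^k · g`, where `S` is the set of the
`m` primes dividing `f` exactly `k` times and the cofactor `g` is again powerful; `(S, g)`
determines `f`. Since `S` consists of `m` distinct positive integers, `∏_{p ∈ S} p ≥ m!`, so for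
`1 < t ≤ k` we get `p^{-k} ≤ (m!)^{-(k-t)} · p^{-t}` on the product over `S`. Summing over the
unordered `m`-sets `S` costs `C^m / m!` with `C = ∑ n^{-t}`, and the powerful numbers
`g = a³b²` have a finite sum of reciprocals `D`. Hence `e_{k,m} ≤ C^m D / (m!)^{k-t+1}`, and
`m! ≥ (m/e)^m` with `t` close to `1` gives the claim.
-/

open scoped ENNReal Nat
open Finset Filter

theorem powerful_iff_factorization_ne_one {n : ℕ} :
    Powerful n ↔ n ≠ 0 ∧ ∀ p, n.factorization p ≠ 1 := by
  refine ⟨fun ⟨hn, hsq⟩ => ⟨hn.ne', fun p hp => ?_⟩, fun ⟨hn, h1⟩ => ⟨Nat.pos_of_ne_zero hn, ?_⟩⟩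
  · have hpn : p ∈ n.primeFactors :=
      Nat.support_factorization n ▸ Finsupp.mem_support_iff.2 (by omega)
    have hpp := Nat.prime_of_mem_primeFactors hpn
    have := (hpp.pow_dvd_iff_le_factorization hn.ne').1
      (hsq p hpp (Nat.dvd_of_mem_primeFactors hpn))
    omega
  · intro p hp hpn
    have := (hp.dvd_iff_one_le_factorization hn).1 hpn
    exact (hp.pow_dvd_iff_le_factorization hn).2 (by have := h1 p; omega)

theorem Powerful.exists_eq_cube_mul_sq {n : ℕ} (hn : Powerful n) :
    ∃ a b : ℕ, a ^ 3 * b ^ 2 = n := by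
  obtain ⟨a, b, rfl, ha⟩ := Nat.sq_mul_squarefree n
  have hb : b ≠ 0 := by rintro rfl; simp [Powerful] at hn
  obtain ⟨c, rfl⟩ : a ∣ b := by
    rw [← Nat.prod_primeFactors_of_squarefree ha, Nat.prod_primeFactors_dvd_iff hb]
    intro p hp
    have hpp := Nat.prime_of_mem_primeFactors hp
    have hp2 := hn.2 p hpp ((Nat.dvd_of_mem_primeFactors hp).trans (dvd_mul_left a _))
    have : p ^ 1 ∣ b ^ 2 := ha.pow_dvd_of_squarefree_of_pow_succ_dvd_mul_left hpp.prime hp2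
    exact Nat.mem_primeFactors.2 ⟨hpp, hpp.dvd_of_dvd_pow (pow_one p ▸ this), hb⟩
  exact ⟨a, c, by ring⟩

theorem summable_powerful_inv : Summable fun g : {g : ℕ // Powerful g} => ((g : ℕ) : ℝ)⁻¹ := by
  choose a b hab using fun g : {g : ℕ // Powerful g} => g.2.exists_eq_cube_mul_sq
  have hinj : Function.Injective fun g => (a g, b g) := fun g g' h => by
    simp only [Prod.mk.injEq] at h
    exact Subtype.ext <| (hab g).symm.trans (h.1 ▸ h.2 ▸ hab g')
  have hsum : Summable fun x : ℕ × ℕ => ((x.1 : ℝ) ^ 3)⁻¹ * ((x.2 : ℝ) ^ 2)⁻¹ :=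
    (Real.summable_nat_pow_inv.2 (by norm_num)).mul_of_nonneg
      (Real.summable_nat_pow_inv.2 (by norm_num)) (fun _ => by positivity) fun _ => by positivity
  refine (hsum.comp_injective hinj).congr fun g => ?_
  simp only [Function.comp_apply, ← hab g]; push_cast; ring

namespace ENNReal

theorem tsum_pi_prod_le {α : Type*} (w : α → ℝ≥0∞) (m : ℕ) :
    ∑' σ : Fin m → α, ∏ i, w (σ i) ≤ (∑' a, w a) ^ m := by
  classical
  rw [ENNReal.tsum_eq_iSup_sum]
  refine iSup_le fun s => ?_
  set T : Finset α := s.biUnion fun σ => univ.image σ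
  calc ∑ σ ∈ s, ∏ i, w (σ i) ≤ ∑ σ ∈ Fintype.piFinset fun _ => T, ∏ i, w (σ i) := by
        refine Finset.sum_le_sum_of_subset fun σ hσ => Fintype.mem_piFinset.2 fun i => ?_
        exact mem_biUnion.2 ⟨σ, hσ, mem_image_of_mem σ (mem_univ i)⟩
    _ = (∑ a ∈ T, w a) ^ m := by
        rw [← Finset.prod_univ_sum, prod_const, card_univ, Fintype.card_fin]
    _ ≤ (∑' a, w a) ^ m := by gcongr; exact ENNReal.sum_le_tsum T

theorem tsum_card_eq_prod_le {α : Type*} [LinearOrder α] (w : α → ℝ≥0∞) (m : ℕ) :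
    ∑' S : {S : Finset α // S.card = m}, ∏ a ∈ S.1, w a ≤ (∑' a, w a) ^ m / m ! := by
  rw [ENNReal.le_div_iff_mul_le (Or.inl (by exact_mod_cast m.factorial_ne_zero))
    (Or.inl (natCast_ne_top _)), mul_comm]
  set enum : Equiv.Perm (Fin m) × {S : Finset α // S.card = m} → (Fin m → α) :=
    fun x => x.2.1.orderEmbOfFin x.2.2 ∘ x.1
  have henum : Function.Injective enum := by
    rintro ⟨τ, S, hS⟩ ⟨τ', S', hS'⟩ h
    obtain rfl : S = S' := by
      have := congrArg Set.range h
      simpa [enum, Set.range_comp, Equiv.range_eq_univ, range_orderEmbOfFin] using this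
    obtain rfl : τ = τ' := Equiv.ext fun i => (S.orderEmbOfFin hS).injective (congrFun h i)
    rfl
  have hprod : ∀ x, ∏ i, w (enum x i) = ∏ a ∈ x.2.1, w a := by
    rintro ⟨τ, S, hS⟩
    calc ∏ i, w (S.orderEmbOfFin hS (τ i)) = ∏ i, w (S.orderEmbOfFin hS i) :=
          Equiv.prod_comp τ fun i => w (S.orderEmbOfFin hS i)
      _ = ∏ a ∈ S, w a := by
          conv_rhs => rw [← map_orderEmbOfFin_univ S hS, prod_map]
          rfl
  calc (m ! : ℝ≥0∞) * ∑' S : {S : Finset α // S.card = m}, ∏ a ∈ S.1, w a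
      = ∑' x, ∏ i, w (enum x i) := by
        simp_rw [hprod, ENNReal.tsum_prod', tsum_fintype, sum_const, card_univ, Fintype.card_perm,
          Fintype.card_fin, nsmul_eq_mul]
    _ ≤ ∑' σ : Fin m → α, ∏ i, w (σ i) := ENNReal.tsum_comp_le_tsum_of_injective henum _
    _ ≤ (∑' a, w a) ^ m := tsum_pi_prod_le w m

end ENNReal

def exactPrimeFactors (k n : ℕ) : Finset ℕ := n.primeFactors.filter fun p => n.factorization p = k

def exactCofactor (k n : ℕ) : ℕ := n / ∏ p ∈ exactPrimeFactors k n, p ^ k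

theorem prime_of_mem_exactPrimeFactors {k n p : ℕ} (hp : p ∈ exactPrimeFactors k n) : p.Prime :=
  Nat.prime_of_mem_primeFactors (mem_filter.1 hp).1

theorem Nat.factorization_prod_pow_of_prime {S : Finset ℕ} (hS : ∀ p ∈ S, p.Prime) (k q : ℕ) :
    (∏ p ∈ S, p ^ k).factorization q = if q ∈ S then k else 0 := by
  rw [Nat.factorization_prod fun p hp => pow_ne_zero k (hS p hp).ne_zero, Finset.sum_apply']
  rw [sum_congr rfl fun p hp => by rw [(hS p hp).factorization_pow, Finsupp.single_apply]]
  exact sum_ite_eq' S q fun _ => k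

theorem prod_exactPrimeFactors_pow_dvd (k n : ℕ) : ∏ p ∈ exactPrimeFactors k n, p ^ k ∣ n := by
  rcases eq_or_ne n 0 with rfl | hn
  · exact dvd_zero _
  rw [← Nat.factorization_le_iff_dvd
    (prod_ne_zero_iff.2 fun p hp => pow_ne_zero k (prime_of_mem_exactPrimeFactors hp).ne_zero) hn]
  intro q
  rw [Nat.factorization_prod_pow_of_prime fun _ => prime_of_mem_exactPrimeFactors]
  split_ifs with hq
  · exact (mem_filter.1 hq).2.ge
  · exact Nat.zero_le _

theorem prod_exactPrimeFactors_pow_mul_exactCofactor (k n : ℕ) :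
    (∏ p ∈ exactPrimeFactors k n, p ^ k) * exactCofactor k n = n :=
  Nat.mul_div_cancel' (prod_exactPrimeFactors_pow_dvd k n)

theorem powerful_exactCofactor {n : ℕ} (hn : Powerful n) (k : ℕ) :
    Powerful (exactCofactor k n) := by
  have hdvd := prod_exactPrimeFactors_pow_dvd k n
  rw [powerful_iff_factorization_ne_one] at hn ⊢
  refine ⟨?_, fun q => ?_⟩
  · exact Nat.div_ne_zero_iff_of_dvd hdvd |>.2 ⟨hn.1, prod_ne_zero_iff.2 fun p hp =>
      pow_ne_zero k (prime_of_mem_exactPrimeFactors hp).ne_zero⟩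
  · rw [exactCofactor, Nat.factorization_div hdvd, Finsupp.tsub_apply,
      Nat.factorization_prod_pow_of_prime fun _ => prime_of_mem_exactPrimeFactors]
    split_ifs with hq
    · rw [(mem_filter.1 hq).2]; simp
    · simpa using hn.2 q

def exactDecomposition (k m : ℕ) :
    {f : ℕ // Powerful f ∧ omegaK k f = m} → {S : Finset ℕ // S.card = m} × {g : ℕ // Powerful g} :=
  fun f => (⟨exactPrimeFactors k f, f.2.2⟩, ⟨exactCofactor k f, powerful_exactCofactor f.2.1 k⟩)

theorem exactDecomposition_injective (k m : ℕ) : Function.Injective (exactDecomposition k m) :=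
  fun f f' h => by
    obtain ⟨hS, hg⟩ := Prod.ext_iff.1 h
    apply Subtype.ext
    rw [← prod_exactPrimeFactors_pow_mul_exactCofactor k f,
      ← prod_exactPrimeFactors_pow_mul_exactCofactor k f']
    exact congrArg₂ (fun S g => (∏ p ∈ S, p ^ k) * g) (congrArg Subtype.val hS)
      (congrArg Subtype.val hg)

theorem card_factorial_le_prod {s : Finset ℕ} (hs : ∀ n ∈ s, 0 < n) : s.card ! ≤ ∏ n ∈ s, n := by
  induction s using Finset.induction_on_max with
  | empty => simp
  | insert a s hlt ih =>
    have has : a ∉ s := fun h => (hlt a h).false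
    have hcard : s.card + 1 ≤ a := by
      have hsub : s ⊆ Ico 1 a := fun x hx => mem_Ico.2 ⟨hs x (mem_insert_of_mem hx), hlt x hx⟩
      have ha : 0 < a := hs a (mem_insert_self a s)
      have := card_le_card hsub
      rw [Nat.card_Ico] at this
      omega
    rw [card_insert_of_notMem has, prod_insert has, Nat.factorial_succ]
    exact Nat.mul_le_mul hcard (ih fun x hx => hs x (mem_insert_of_mem hx))

theorem inv_prod_pow_le_card_factorial_rpow_mul {S : Finset ℕ} (hS : ∀ p ∈ S, 0 < p) {k : ℕ}
    {t : ℝ} (htk : t ≤ k) :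
    ((∏ p ∈ S, p ^ k : ℕ) : ℝ)⁻¹ ≤ (S.card ! : ℝ) ^ (-(k - t)) * ∏ p ∈ S, (p : ℝ) ^ (-t) := by
  set P : ℝ := ∏ p ∈ S, (p : ℝ)
  have hP : 0 < P := prod_pos fun p hp => Nat.cast_pos.2 (hS p hp)
  have hfac : (S.card ! : ℝ) ≤ P := by
    simpa [P] using Nat.cast_le (α := ℝ).2 (card_factorial_le_prod hS)
  calc ((∏ p ∈ S, p ^ k : ℕ) : ℝ)⁻¹ = P ^ (-(k - t)) * P ^ (-t) := by
        rw [← Real.rpow_add hP, show -((k : ℝ) - t) + -t = -k by ring, Real.rpow_neg hP.le,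
          Real.rpow_natCast]
        push_cast [prod_pow]
        rfl
    _ ≤ (S.card ! : ℝ) ^ (-(k - t)) * ∏ p ∈ S, (p : ℝ) ^ (-t) := by
        rw [Real.finsetProd_rpow _ _ (fun p _ => Nat.cast_nonneg p)]
        exact mul_le_mul_of_nonneg_right
          (Real.rpow_le_rpow_of_nonpos (by positivity) hfac (by linarith)) (by positivity)

theorem inv_le_card_factorial_rpow_mul_prod_mul_inv_exactCofactor (k n : ℕ) {t : ℝ}
    (htk : t ≤ k) :
    (n : ℝ)⁻¹ ≤ ((exactPrimeFactors k n).card ! : ℝ) ^ (-(k - t)) *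
      (∏ p ∈ exactPrimeFactors k n, (p : ℝ) ^ (-t)) * (exactCofactor k n : ℝ)⁻¹ := by
  conv_lhs => rw [← prod_exactPrimeFactors_pow_mul_exactCofactor k n]
  rw [Nat.cast_mul, mul_inv]
  exact mul_le_mul_of_nonneg_right (inv_prod_pow_le_card_factorial_rpow_mul
    (fun _ hp => (prime_of_mem_exactPrimeFactors hp).pos) htk) (by positivity)

theorem tsum_ofReal_inv_powerful_omegaK_le (k m : ℕ) {t : ℝ} (ht : 1 < t) (htk : t ≤ k) :
    ∑' f : {f : ℕ // Powerful f ∧ omegaK k f = m}, ENNReal.ofReal ((f : ℕ) : ℝ)⁻¹ ≤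
      ENNReal.ofReal ((m ! : ℝ) ^ (-(k - t + 1)) * (∑' n : ℕ, (n : ℝ) ^ (-t)) ^ m *
        ∑' g : {g : ℕ // Powerful g}, ((g : ℕ) : ℝ)⁻¹) := by
  set C : ℝ := ∑' n : ℕ, (n : ℝ) ^ (-t)
  set D : ℝ := ∑' g : {g : ℕ // Powerful g}, ((g : ℕ) : ℝ)⁻¹
  have hC : ENNReal.ofReal C = ∑' n : ℕ, ENNReal.ofReal ((n : ℝ) ^ (-t)) :=
    ENNReal.ofReal_tsum_of_nonneg (fun n => by positivity) (Real.summable_nat_rpow.2 (by linarith))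
  have hD : ENNReal.ofReal D = ∑' g : {g : ℕ // Powerful g}, ENNReal.ofReal ((g : ℕ) : ℝ)⁻¹ :=
    ENNReal.ofReal_tsum_of_nonneg (fun g => by positivity) summable_powerful_inv
  let G : {S : Finset ℕ // S.card = m} × {g : ℕ // Powerful g} → ℝ≥0∞ := fun x =>
    ENNReal.ofReal ((m ! : ℝ) ^ (-(k - t))) * (∏ p ∈ x.1.1, ENNReal.ofReal ((p : ℝ) ^ (-t))) *
      ENNReal.ofReal ((x.2 : ℕ) : ℝ)⁻¹
  have hG : ∀ f : {f : ℕ // Powerful f ∧ omegaK k f = m},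
      ENNReal.ofReal ((f : ℕ) : ℝ)⁻¹ ≤ G (exactDecomposition k m f) := fun f => by
    have key := inv_le_card_factorial_rpow_mul_prod_mul_inv_exactCofactor k f htk
    rw [show (exactPrimeFactors k f).card = m from f.2.2] at key
    simp only [G, exactDecomposition]
    rw [← ENNReal.ofReal_prod_of_nonneg fun p _ => by positivity,
      ← ENNReal.ofReal_mul (by positivity), ← ENNReal.ofReal_mul (by positivity)]
    exact ENNReal.ofReal_le_ofReal key
  have hm : (0 : ℝ) < m ! := by positivity
  calc ∑' f : {f : ℕ // Powerful f ∧ omegaK k f = m}, ENNReal.ofReal ((f : ℕ) : ℝ)⁻¹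
      ≤ ∑' x, G x := (ENNReal.tsum_le_tsum hG).trans
          (ENNReal.tsum_comp_le_tsum_of_injective (exactDecomposition_injective k m) G)
    _ = ENNReal.ofReal ((m ! : ℝ) ^ (-(k - t))) * (∑' S : {S : Finset ℕ // S.card = m},
          ∏ p ∈ S.1, ENNReal.ofReal ((p : ℝ) ^ (-t))) * ENNReal.ofReal D := by
        simp_rw [G, ENNReal.tsum_prod', ENNReal.tsum_mul_left, ENNReal.tsum_mul_right, hD,
          ENNReal.tsum_mul_left]
    _ ≤ ENNReal.ofReal ((m ! : ℝ) ^ (-(k - t))) * (ENNReal.ofReal C ^ m / m !) *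
          ENNReal.ofReal D := by
        rw [hC]
        gcongr
        exact ENNReal.tsum_card_eq_prod_le _ m
    _ = _ := by
        rw [← ENNReal.ofReal_pow (tsum_nonneg fun n => by positivity), ← ENNReal.ofReal_natCast,
          ← ENNReal.ofReal_div_of_pos hm, ← ENNReal.ofReal_mul (by positivity),
          ← ENNReal.ofReal_mul (by positivity), show -((k : ℝ) - t + 1) = -(k - t) + -1 by ring,
          Real.rpow_add hm, Real.rpow_neg_one]
        simp only [C]
        ring_nf

theorem inv_mul_prod_inv_one_add_le (f : ℕ) :
    (f : ℝ)⁻¹ * ∏ p ∈ f.primeFactors, (1 + 1 / (p : ℝ))⁻¹ ≤ (f : ℝ)⁻¹ :=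
  mul_le_of_le_one_right (by positivity) <| prod_le_one (fun _ _ => by positivity) fun p _ =>
    inv_le_one_of_one_le₀ (le_add_of_nonneg_right (by positivity))

theorem ekm_le_factorial_rpow_mul (k m : ℕ) {t : ℝ} (ht : 1 < t) (htk : t ≤ k) :
    ekm k m ≤ (m ! : ℝ) ^ (-(k - t + 1)) * (∑' n : ℕ, (n : ℝ) ^ (-t)) ^ m *
      ∑' g : {g : ℕ // Powerful g}, ((g : ℕ) : ℝ)⁻¹ := by
  set B := (m ! : ℝ) ^ (-(k - t + 1)) * (∑' n : ℕ, (n : ℝ) ^ (-t)) ^ m *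
      ∑' g : {g : ℕ // Powerful g}, ((g : ℕ) : ℝ)⁻¹
  have hB := tsum_ofReal_inv_powerful_omegaK_le k m ht htk
  set S := ∑' f : {f : ℕ // Powerful f ∧ omegaK k f = m},
      ((f : ℕ) : ℝ)⁻¹ * ∏ p ∈ (f : ℕ).primeFactors, (1 + 1 / (p : ℝ))⁻¹
  have hS : S ≤ B := calc
    S = (∑' f : {f : ℕ // Powerful f ∧ omegaK k f = m}, ENNReal.ofReal
          (((f : ℕ) : ℝ)⁻¹ * ∏ p ∈ (f : ℕ).primeFactors, (1 + 1 / (p : ℝ))⁻¹)).toReal := by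
        rw [ENNReal.tsum_toReal_eq fun _ => ENNReal.ofReal_ne_top]
        exact tsum_congr fun f => (ENNReal.toReal_ofReal (by positivity)).symm
    _ ≤ (ENNReal.ofReal B).toReal := by
        refine ENNReal.toReal_mono ENNReal.ofReal_ne_top (le_trans ?_ hB)
        exact ENNReal.tsum_le_tsum fun f => ENNReal.ofReal_le_ofReal (inv_mul_prod_inv_one_add_le f)
    _ = B := ENNReal.toReal_ofReal (by positivity)
  have hpi : 6 / Real.pi ^ 2 ≤ 1 := by
    rw [div_le_one (by positivity)]
    nlinarith [Real.pi_gt_three]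
  calc ekm k m = 6 / Real.pi ^ 2 * S := rfl
    _ ≤ 1 * S := mul_le_mul_of_nonneg_right hpi (tsum_nonneg fun f => by positivity)
    _ ≤ B := (one_mul S).trans_le hS

theorem factorial_rpow_neg_le (m : ℕ) {s : ℝ} (hs : 0 ≤ s) :
    (m ! : ℝ) ^ (-s) ≤ (m : ℝ) ^ (-(s * m)) * Real.exp s ^ m := by
  have hpos : 0 < (m : ℝ) ^ m * Real.exp (-m) := by
    rcases m.eq_zero_or_pos with rfl | hm
    · simp
    · positivity
  have hle : (m : ℝ) ^ m * Real.exp (-m) ≤ m ! := by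
    have := Real.pow_div_factorial_le_exp (m : ℝ) (Nat.cast_nonneg m) m
    rw [div_le_iff₀ (by positivity)] at this
    rw [Real.exp_neg, ← div_eq_mul_inv, div_le_iff₀ (Real.exp_pos _), mul_comm]
    exact this
  calc (m ! : ℝ) ^ (-s) ≤ ((m : ℝ) ^ m * Real.exp (-m)) ^ (-s) :=
        Real.rpow_le_rpow_of_nonpos hpos hle (by linarith)
    _ = (m : ℝ) ^ (-(s * m)) * Real.exp s ^ m := by
        rw [Real.mul_rpow (by positivity) (Real.exp_pos _).le,
          ← Real.rpow_natCast_mul (by positivity), ← Real.exp_mul, ← Real.exp_nat_mul]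
        ring_nf

theorem eventually_pow_mul_le_rpow (A D : ℝ) (hA : 0 ≤ A) {δ : ℝ} (hδ : 0 < δ) :
    ∀ᶠ m : ℕ in atTop, A ^ m * D ≤ (m : ℝ) ^ (δ * m) := by
  have hlarge := ((tendsto_rpow_atTop hδ).comp tendsto_natCast_atTop_atTop).eventually_ge_atTop
    (max A 1 * max D 1)
  filter_upwards [hlarge, eventually_ge_atTop 1] with m hm hm1
  calc A ^ m * D ≤ A ^ m * max D 1 := mul_le_mul_of_nonneg_left (le_max_left D 1) (by positivity)
    _ ≤ max A 1 ^ m * max D 1 ^ m :=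
        mul_le_mul (pow_le_pow_left₀ hA (le_max_left A 1) m)
          (le_self_pow₀ (le_max_right D 1) (by omega)) (by positivity) (by positivity)
    _ = (max A 1 * max D 1) ^ m := (mul_pow _ _ _).symm
    _ ≤ ((m : ℝ) ^ δ) ^ m := pow_le_pow_left₀ (by positivity) hm m
    _ = (m : ℝ) ^ (δ * m) := by rw [← Real.rpow_natCast, ← Real.rpow_mul (Nat.cast_nonneg _)]

theorem eventually_ekm_le_rpow (k : ℕ) (hk : 2 ≤ k) {δ : ℝ} (hδ : 0 < δ) (hδ2 : δ ≤ 2) :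
    ∀ᶠ m : ℕ in atTop, ekm k m ≤ (m : ℝ) ^ (-((k - δ) * m)) := by
  have hk' : (2 : ℝ) ≤ k := by exact_mod_cast hk
  set s : ℝ := k - δ / 2
  have hs : 0 ≤ s := by simp only [s]; linarith
  set C := ∑' n : ℕ, (n : ℝ) ^ (-(1 + δ / 2))
  set D := ∑' g : {g : ℕ // Powerful g}, ((g : ℕ) : ℝ)⁻¹
  filter_upwards [eventually_pow_mul_le_rpow (Real.exp s * C) D
    (by positivity) (half_pos hδ), eventually_ge_atTop 1] with m hm hm1
  calc ekm k m ≤ (m ! : ℝ) ^ (-s) * C ^ m * D := by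
        convert ekm_le_factorial_rpow_mul k m (t := 1 + δ / 2) (by linarith) (by linarith)
          using 4
        ring
    _ ≤ (m : ℝ) ^ (-(s * m)) * Real.exp s ^ m * C ^ m * D := by
        gcongr
        exact factorial_rpow_neg_le m hs
    _ = (m : ℝ) ^ (-(s * m)) * ((Real.exp s * C) ^ m * D) := by ring
    _ ≤ (m : ℝ) ^ (-(s * m)) * (m : ℝ) ^ (δ / 2 * m) := by gcongr
    _ = (m : ℝ) ^ (-((k - δ) * m)) := by
        rw [← Real.rpow_add (by exact_mod_cast hm1)]
        simp only [s]
        ring_nf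

theorem ekm_decay (k : ℕ) (hk : 2 ≤ k) :
    ∀ ε : ℝ, 0 < ε → ∃ M : ℕ, ∀ m : ℕ, M ≤ m →
      ekm k m ≤ (m : ℝ) ^ (-(((k : ℝ) - ε) * m)) := by
  intro ε hε
  obtain ⟨M, hM⟩ := eventually_atTop.1 <|
    (eventually_ekm_le_rpow k hk (lt_min hε two_pos) (min_le_right ε 2)).and (eventually_ge_atTop 1)
  refine ⟨M, fun m hm => (hM m hm).1.trans (Real.rpow_le_rpow_of_exponent_le ?_ ?_)⟩
  · exact_mod_cast (hM m hm).2
  · gcongr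
    exact min_le_left ε 2
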